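/- arXiv:1605.04940 — 2 statements merged into one kernel-verified Lean document; each statement's English description precedes it below -/
import Mathlib

section
/- Let δ ∈ ℝ and let ε be a random variable with conditional density h bounded below: h(λ) ≥ h₁ > 0 for all |λ| < τ, where 0 < τ. Then E[(θ - I(ε < δ))(ε - δ)] - E[(θ - I(ε < 0))ε] ≥ (1/2)τ²h₁·I(|δ| > τ), provided P(ε < 0) = θ. -/
/-!
Knight's identity splits the excess check loss `ρ_θ(ε - δ) - ρ_θ(ε)` into the term
`δ (1{ε < 0} - θ)`, whose expectation vanishes because `θ` is the probability of `ε < 0`,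
and a remainder `r_δ(ε) ≥ 0` supported between `0` and `δ` with `∫ r_δ = δ² / 2`.
The remainder grows with `|δ|` on each side of `0`, so for `|δ| > τ` it dominates `r_{±τ}`,
which lives in `(-τ, τ)` where the law of `ε` has density at least `h₁`; hence
`E r_δ(ε) ≥ h₁ τ² / 2`.
-/

open MeasureTheory Set

/-- The remainder in Knight's identity for the check loss, `∫_0^c (1{x < s} - 1{x < 0}) ds`. -/
noncomputable def checkLossRemainder (c x : ℝ) : ℝ :=
  ((if x < c then 1 else 0) - (if x < 0 then 1 else 0)) * (c - x)

lemma checkLoss_sub_checkLoss (θ c x : ℝ) :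
    (θ - if x < c then 1 else 0) * (x - c) - (θ - if x < 0 then 1 else 0) * x =
      c * ((if x < 0 then 1 else 0) - θ) + checkLossRemainder c x := by
  unfold checkLossRemainder
  split_ifs <;> ring

lemma smul_restrict_le_withDensity {α : Type*} [MeasurableSpace α] {μ : Measure α} {s : Set α}
    (hs : MeasurableSet s) {f : α → ENNReal} {a : ENNReal} (h : ∀ x ∈ s, a ≤ f x) :
    a • μ.restrict s ≤ μ.withDensity f := by
  rw [← withDensity_const, ← withDensity_indicator hs]
  exact withDensity_mono (ae_of_all _ (indicator_le h))

namespace checkLossRemainder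

lemma nonneg (c x : ℝ) : 0 ≤ checkLossRemainder c x := by
  unfold checkLossRemainder
  split_ifs <;> linarith

lemma le_of_mem_uIcc {c d : ℝ} (hc : c ∈ uIcc 0 d) (x : ℝ) :
    checkLossRemainder c x ≤ checkLossRemainder d x := by
  unfold checkLossRemainder
  rcases le_total 0 d with hd | hd
  · rw [uIcc_of_le hd] at hc
    split_ifs <;> linarith [hc.1, hc.2]
  · rw [uIcc_of_ge hd] at hc
    split_ifs <;> linarith [hc.1, hc.2]

lemma eq_zero_of_abs_le {c x : ℝ} (h : |c| ≤ |x|) : checkLossRemainder c x = 0 := by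
  unfold checkLossRemainder
  split_ifs <;> cases abs_cases c <;> cases abs_cases x <;> nlinarith

lemma abs_le (c x : ℝ) : |checkLossRemainder c x| ≤ |c| := by
  rw [abs_of_nonneg (nonneg c x)]
  unfold checkLossRemainder
  split_ifs <;> cases abs_cases c <;> linarith

lemma measurable (c : ℝ) : Measurable (checkLossRemainder c) :=
  ((Measurable.ite measurableSet_Iio measurable_const measurable_const).sub
    (Measurable.ite measurableSet_Iio measurable_const measurable_const)).mul
    (measurable_const.sub measurable_id)

lemma integrable (c : ℝ) (ν : Measure ℝ) [IsFiniteMeasure ν] :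
    Integrable (checkLossRemainder c) ν :=
  .of_bound (measurable c).aestronglyMeasurable |c| (ae_of_all _ (abs_le c))

lemma integral_eq (c : ℝ) : ∫ x, checkLossRemainder c x = c ^ 2 / 2 := by
  rcases le_total 0 c with hc | hc
  · have hind : checkLossRemainder c = (Ico 0 c).indicator (fun x => c - x) := by
      ext x
      simp only [checkLossRemainder, indicator_apply, mem_Ico]
      split_ifs <;> grind
    rw [hind, integral_indicator measurableSet_Ico, integral_Ico_eq_integral_Ioc,
      ← intervalIntegral.integral_of_le hc]
    simp [intervalIntegral.integral_comp_sub_left (fun x => x)]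
  · have hind : checkLossRemainder c = (Ico c 0).indicator (fun x => x - c) := by
      ext x
      simp only [checkLossRemainder, indicator_apply, mem_Ico]
      split_ifs <;> grind
    rw [hind, integral_indicator measurableSet_Ico, integral_Ico_eq_integral_Ioc,
      ← intervalIntegral.integral_of_le hc]
    simp
    ring

variable {ν : Measure ℝ} [IsFiniteMeasure ν] {h₁ τ : ℝ}

lemma mul_sq_div_two_le_integral (hh₁ : 0 ≤ h₁)
    (hν : ENNReal.ofReal h₁ • volume.restrict (Ioo (-τ) τ) ≤ ν) {c : ℝ} (hc : |c| ≤ τ) :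
    h₁ * (c ^ 2 / 2) ≤ ∫ x, checkLossRemainder c x ∂ν := by
  have hsupp : ∀ x ∉ Ioo (-τ) τ, checkLossRemainder c x = 0 := fun x hx =>
    eq_zero_of_abs_le (hc.trans (by rw [mem_Ioo, ← _root_.abs_lt] at hx; exact not_lt.1 hx))
  calc h₁ * (c ^ 2 / 2)
      = ∫ x, checkLossRemainder c x ∂(ENNReal.ofReal h₁ • volume.restrict (Ioo (-τ) τ)) := by
        rw [integral_smul_measure, setIntegral_eq_integral_of_forall_compl_eq_zero hsupp,
          integral_eq, ENNReal.toReal_ofReal hh₁, smul_eq_mul]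
    _ ≤ ∫ x, checkLossRemainder c x ∂ν :=
        integral_mono_measure hν (ae_of_all _ (nonneg c)) (integrable c ν)

lemma half_sq_mul_le_integral (hh₁ : 0 ≤ h₁) (hτ : 0 ≤ τ)
    (hν : ENNReal.ofReal h₁ • volume.restrict (Ioo (-τ) τ) ≤ ν) {δ : ℝ} (hδ : τ < |δ|) :
    1 / 2 * τ ^ 2 * h₁ ≤ ∫ x, checkLossRemainder δ x ∂ν := by
  obtain ⟨c, hc, hcδ⟩ : ∃ c, |c| = τ ∧ c ∈ uIcc 0 δ := by
    rcases le_total 0 δ with hδ0 | hδ0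
    · rw [abs_of_nonneg hδ0] at hδ
      exact ⟨τ, abs_of_nonneg hτ, by rw [uIcc_of_le hδ0]; exact ⟨hτ, hδ.le⟩⟩
    · rw [abs_of_nonpos hδ0] at hδ
      exact ⟨-τ, by simpa using hτ, by rw [uIcc_of_ge hδ0]; constructor <;> linarith⟩
  calc 1 / 2 * τ ^ 2 * h₁ = h₁ * (c ^ 2 / 2) := by rw [← sq_abs c, hc]; ring
    _ ≤ ∫ x, checkLossRemainder c x ∂ν := mul_sq_div_two_le_integral hh₁ hν hc.le
    _ ≤ ∫ x, checkLossRemainder δ x ∂ν :=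
        integral_mono (integrable c ν) (integrable δ ν) (le_of_mem_uIcc hcδ)

end checkLossRemainder

section

variable {Ω : Type*} [MeasurableSpace Ω] {μ : Measure Ω} {X : Ω → ℝ}

lemma integrable_checkLoss [IsFiniteMeasure μ] (hX : Measurable X) (hint : Integrable X μ)
    (θ c : ℝ) : Integrable (fun ω => (θ - if X ω < c then 1 else 0) * (X ω - c)) μ := by
  refine (hint.sub (integrable_const c)).bdd_mul (c := |θ| + 1)
    (measurable_const.sub (Measurable.ite (measurableSet_lt hX measurable_const)
      measurable_const measurable_const)).aestronglyMeasurable (ae_of_all _ fun ω => ?_)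
  split_ifs
  · simpa using abs_sub θ 1
  · simp

lemma integral_ite_lt_zero_one (hX : Measurable X) :
    ∫ ω, (if X ω < 0 then 1 else 0 : ℝ) ∂μ = μ.real {ω | X ω < 0} := by
  rw [← integral_indicator_one (measurableSet_lt hX measurable_const)]
  simp only [indicator_apply, mem_ofPred_eq, Pi.one_apply]

lemma integral_checkLoss_sub_integral_checkLoss [IsProbabilityMeasure μ] (hX : Measurable X)
    (hint : Integrable X μ) (θ c : ℝ) :
    (∫ ω, (θ - if X ω < c then 1 else 0) * (X ω - c) ∂μ) -
        ∫ ω, (θ - if X ω < 0 then 1 else 0) * X ω ∂μ =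
      c * (μ.real {ω | X ω < 0} - θ) + ∫ x, checkLossRemainder c x ∂μ.map X := by
  have hzero := integrable_checkLoss hX hint θ 0
  simp only [sub_zero] at hzero
  have hind : Integrable (fun ω => (if X ω < 0 then 1 else 0 : ℝ)) μ :=
    .of_bound (Measurable.ite (measurableSet_lt hX measurable_const) measurable_const
      measurable_const).aestronglyMeasurable 1 (ae_of_all _ fun ω => by split_ifs <;> simp)
  rw [← integral_sub (integrable_checkLoss hX hint θ c) hzero]
  simp_rw [checkLoss_sub_checkLoss]
  have hlin : Integrable (fun ω => c * ((if X ω < 0 then 1 else 0) - θ)) μ :=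
    (hind.sub (integrable_const θ)).const_mul c
  have hrem : Integrable (fun ω => checkLossRemainder c (X ω)) μ :=
    (checkLossRemainder.integrable c _).comp_measurable hX
  rw [integral_add hlin hrem, integral_const_mul, integral_sub hind (integrable_const θ),
    integral_ite_lt_zero_one hX,
    integral_map hX.aemeasurable (checkLossRemainder.measurable c).aestronglyMeasurable]
  simp

end

theorem stmt_7_general {Ω : Type*} [MeasurableSpace Ω] (μ : Measure Ω) [IsProbabilityMeasure μ]
    (ε : Ω → ℝ) (hε : Measurable ε) (hint : Integrable ε μ)
    (h : ℝ → ℝ)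
    (hdens : Measure.map ε μ = MeasureTheory.volume.withDensity (fun x => ENNReal.ofReal (h x)))
    (θ h₁ τ δ : ℝ) (hh₁ : 0 < h₁) (hτ : 0 < τ)
    (hlb : ∀ lam : ℝ, |lam| < τ → h₁ ≤ h lam)
    (hθq : μ {ω | ε ω < 0} = ENNReal.ofReal θ) :
    (∫ ω, (θ - if ε ω < δ then 1 else 0) * (ε ω - δ) ∂μ) -
      (∫ ω, (θ - if ε ω < 0 then 1 else 0) * ε ω ∂μ) ≥
      (1 / 2) * τ ^ 2 * h₁ * (if |δ| > τ then 1 else 0) := by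
  have hν : ENNReal.ofReal h₁ • volume.restrict (Ioo (-τ) τ) ≤ μ.map ε := by
    rw [hdens]
    exact smul_restrict_le_withDensity measurableSet_Ioo fun x hx =>
      ENNReal.ofReal_le_ofReal (hlb x (abs_lt.2 hx))
  -- `hθq` alone allows `θ < 0` (then `ofReal θ = 0`); the density bound rules this out.
  have hθ : μ.real {ω | ε ω < 0} = θ := by
    have hpos : 0 < μ {ω | ε ω < 0} := by
      rw [show {ω | ε ω < 0} = ε ⁻¹' Iio 0 from rfl, ← Measure.map_apply hε measurableSet_Iio]
      refine lt_of_lt_of_le ?_ (hν (Iio 0))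
      rw [Measure.smul_apply, Measure.restrict_apply measurableSet_Iio, Iio_inter_Ioo,
        min_eq_left hτ.le]
      simp [hh₁, hτ]
    rw [hθq, ENNReal.ofReal_pos] at hpos
    rw [measureReal_def, hθq, ENNReal.toReal_ofReal hpos.le]
  rw [integral_checkLoss_sub_integral_checkLoss hε hint, hθ, sub_self, mul_zero, zero_add,
    ge_iff_le]
  split_ifs with hδ
  · simpa using checkLossRemainder.half_sq_mul_le_integral hh₁.le hτ.le hν hδ
  · simpa using integral_nonneg (checkLossRemainder.nonneg δ)

theorem stmt_7 {Ω : Type*} [MeasurableSpace Ω] (μ : Measure Ω) [IsProbabilityMeasure μ]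
    (ε : Ω → ℝ) (hε : Measurable ε) (hint : Integrable ε μ)
    (h : ℝ → ℝ) (hh0 : ∀ x, 0 ≤ h x)
    (hdens : Measure.map ε μ = MeasureTheory.volume.withDensity (fun x => ENNReal.ofReal (h x)))
    (θ h₁ τ δ : ℝ) (hh₁ : 0 < h₁) (hτ : 0 < τ)
    (hlb : ∀ lam : ℝ, |lam| < τ → h₁ ≤ h lam)
    (hθq : μ {ω | ε ω < 0} = ENNReal.ofReal θ) :
    (∫ ω, (θ - if ε ω < δ then 1 else 0) * (ε ω - δ) ∂μ) -
      (∫ ω, (θ - if ε ω < 0 then 1 else 0) * ε ω ∂μ) ≥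
      (1 / 2) * τ ^ 2 * h₁ * (if |δ| > τ then 1 else 0) :=
  stmt_7_general μ ε hε hint h hdens θ h₁ τ δ hh₁ hτ hlb hθq
end

section
/- For a random variable ε with density h and P(ε ≤ 0) = θ ∈ (0,1), and any δ > 0, E[ρ_θ(ε - δ)] - E[ρ_θ(ε)] = ∫₀^δ (δ - λ)·h(λ) dλ ≥ 0, where ρ_θ is the check loss. -/
open MeasureTheory

noncomputable def checkLoss (θ u : ℝ) : ℝ := (θ - if u < 0 then 1 else 0) * u

open Set

/-!
Writing `checkLoss θ u = θ u + max (-u) 0`, the increment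
`checkLoss θ (u - δ) - checkLoss θ u` equals `-θ δ + δ` on `u ≤ 0`, `-θ δ + (δ - u)` on `0 < u ≤ δ`,
and `-θ δ` on `δ < u`. Integrating against the law of `ε`, the `δ` and `-θ δ` terms cancel because
`P(ε ≤ 0) = θ`, and the middle term gives `∫₀^δ (δ - λ) h(λ) dλ`, which is nonnegative.
-/

lemma checkLoss_eq_mul_add_max (θ u : ℝ) : checkLoss θ u = θ * u + max (-u) 0 := by
  unfold checkLoss
  split_ifs with hu
  · rw [max_eq_left (by linarith)]; ring
  · rw [max_eq_right (by linarith)]; ring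

@[fun_prop]
lemma continuous_checkLoss (θ : ℝ) : Continuous (checkLoss θ) := by
  simp only [funext (checkLoss_eq_mul_add_max θ)]
  fun_prop

lemma MeasureTheory.Integrable.checkLoss {α : Type*} [MeasurableSpace α] {μ : Measure α}
    {X : α → ℝ} (hX : Integrable X μ) (θ : ℝ) : Integrable (fun a => checkLoss θ (X a)) μ := by
  simp only [checkLoss_eq_mul_add_max]
  exact (hX.const_mul θ).add hX.neg.pos_part

lemma checkLoss_sub_sub_checkLoss (θ : ℝ) {δ : ℝ} (hδ : 0 ≤ δ) (u : ℝ) :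
    checkLoss θ (u - δ) - checkLoss θ u =
      (Iic 0).indicator (fun _ => δ) u + (Ioc 0 δ).indicator (fun x => δ - x) u - θ * δ := by
  simp only [checkLoss_eq_mul_add_max, indicator_apply, mem_Iic, mem_Ioc]
  split_ifs with h0 h1 h1
  · exact absurd h1.1 (not_lt.2 h0)
  · rw [max_eq_left (by linarith), max_eq_left (by linarith)]; ring
  · rw [max_eq_left (by linarith), max_eq_right (by linarith)]; ring
  · have hδu : δ < u := not_le.1 fun hu => h1 ⟨not_le.1 h0, hu⟩
    rw [max_eq_right (by linarith), max_eq_right (by linarith)]; ring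

lemma integral_checkLoss_sub_sub_integral_checkLoss (ν : Measure ℝ) [IsProbabilityMeasure ν]
    (hν : Integrable id ν) (θ : ℝ) {δ : ℝ} (hδ : 0 ≤ δ) :
    ∫ x, checkLoss θ (x - δ) ∂ν - ∫ x, checkLoss θ x ∂ν =
      δ * ν.real (Iic 0) + ∫ x in Ioc 0 δ, (δ - x) ∂ν - θ * δ := by
  have hshift : Integrable (fun x => x - δ) ν := hν.sub (integrable_const δ)
  have hle : Integrable ((Iic 0).indicator fun _ => δ) ν :=
    (integrable_const δ).indicator measurableSet_Iic
  have hmid : Integrable ((Ioc 0 δ).indicator fun x => δ - x) ν :=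
    ((integrable_const δ).sub hν).indicator measurableSet_Ioc
  have hsum : Integrable (fun x => (Iic 0).indicator (fun _ => δ) x +
      (Ioc 0 δ).indicator (fun x => δ - x) x) ν := hle.add hmid
  rw [← integral_sub (hshift.checkLoss θ) (Integrable.checkLoss (X := fun x => x) hν θ)]
  simp only [checkLoss_sub_sub_checkLoss θ hδ]
  rw [integral_sub hsum (integrable_const _), integral_add hle hmid,
    integral_indicator_const δ measurableSet_Iic, integral_indicator measurableSet_Ioc,
    integral_const, probReal_univ, smul_eq_mul, smul_eq_mul, mul_comm, one_mul]

lemma setIntegral_withDensity_ofReal {h : ℝ → ℝ} (hm : Measurable h) (hh0 : ∀ x, 0 ≤ h x)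
    (g : ℝ → ℝ) (s : Set ℝ) :
    ∫ x in s, g x ∂volume.withDensity (fun x => ENNReal.ofReal (h x)) = ∫ x in s, g x * h x := by
  rw [setIntegral_withDensity_eq_setIntegral_toReal_smul' s hm.ennreal_ofReal
    (ae_of_all _ fun _ => ENNReal.ofReal_lt_top)]
  simp only [ENNReal.toReal_ofReal (hh0 _), smul_eq_mul, mul_comm]

theorem stmt_8_general {Ω : Type*} [MeasurableSpace Ω] (μ : Measure Ω) [IsProbabilityMeasure μ]
    (ε : Ω → ℝ) (hε : Measurable ε) (hint : Integrable ε μ)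
    (h : ℝ → ℝ) (hh0 : ∀ x, 0 ≤ h x) (hhc : Continuous h)
    (hdens : Measure.map ε μ = MeasureTheory.volume.withDensity (fun x => ENNReal.ofReal (h x)))
    (θ : ℝ) (hθ0 : 0 < θ)
    (hθq : μ {ω | ε ω ≤ 0} = ENNReal.ofReal θ)
    (δ : ℝ) (hδ : 0 < δ) :
    (∫ ω, checkLoss θ (ε ω - δ) ∂μ) - (∫ ω, checkLoss θ (ε ω) ∂μ) =
      (∫ x in Set.Ioc 0 δ, (δ - x) * h x) ∧
    0 ≤ ∫ x in Set.Ioc 0 δ, (δ - x) * h x := by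
  have : IsProbabilityMeasure (μ.map ε) := Measure.isProbabilityMeasure_map hε.aemeasurable
  have hlaw : Integrable id (μ.map ε) := (integrable_map_measure (by fun_prop) (by fun_prop)).2 hint
  have hquantile : (μ.map ε).real (Iic 0) = θ := by
    rw [map_measureReal_apply hε measurableSet_Iic, measureReal_def]
    exact (congrArg ENNReal.toReal hθq).trans (ENNReal.toReal_ofReal hθ0.le)
  refine ⟨?_, setIntegral_nonneg measurableSet_Ioc fun x hx =>
    mul_nonneg (sub_nonneg.2 hx.2) (hh0 x)⟩
  rw [← integral_map (f := fun x => checkLoss θ (x - δ)) hε.aemeasurable (by fun_prop),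
    ← integral_map (f := checkLoss θ) hε.aemeasurable (by fun_prop),
    integral_checkLoss_sub_sub_integral_checkLoss _ hlaw θ hδ.le, hquantile, hdens,
    setIntegral_withDensity_ofReal hhc.measurable hh0]
  ring

theorem stmt_8 {Ω : Type*} [MeasurableSpace Ω] (μ : Measure Ω) [IsProbabilityMeasure μ]
    (ε : Ω → ℝ) (hε : Measurable ε) (hint : Integrable ε μ)
    (h : ℝ → ℝ) (hh0 : ∀ x, 0 ≤ h x) (hhc : Continuous h)
    (hdens : Measure.map ε μ = MeasureTheory.volume.withDensity (fun x => ENNReal.ofReal (h x)))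
    (θ : ℝ) (hθ0 : 0 < θ) (hθ1 : θ < 1)
    (hθq : μ {ω | ε ω ≤ 0} = ENNReal.ofReal θ)
    (δ : ℝ) (hδ : 0 < δ) :
    (∫ ω, checkLoss θ (ε ω - δ) ∂μ) - (∫ ω, checkLoss θ (ε ω) ∂μ) =
      (∫ x in Set.Ioc 0 δ, (δ - x) * h x) ∧
    0 ≤ ∫ x in Set.Ioc 0 δ, (δ - x) * h x :=
  stmt_8_general μ ε hε hint h hh0 hhc hdens θ hθ0 hθq δ hδ
end
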